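/- Let R be a finite commutative chain ring with maximal ideal generated by π of nilpotency index ν, and S a Galois extension of R of degree m with residue field F_{q^m} and natural projection Ψ extended coefficient-by-coefficient. Let C be an F_{q^m}-linear rank metric code of length n, rank k, and minimum rank distance d, generated by g_1,…,g_k; choose g'_j ∈ S^n with Ψ(g'_j) = g_j, let C' be the S-linear code generated by g'_1,…,g'_k, and set C'' = soc(C'). Then C'' is an S-linear rank metric code of length n, rank k, and minimum rank distance d. -/

import Mathlib

open IsLocalRing

/-- The rank of a submodule `N`: the smallest number of elements generating `N`. -/
noncomputable def subrank {R M : Type*} [Semiring R] [AddCommMonoid M] [Module R M]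
    (N : Submodule R M) : ℕ :=
  sInf {k | ∃ f : Fin k → M, Submodule.span R (Set.range f) = N}

/-- The rank of a vector `u ∈ S^n` over `R`: the smallest number of generators of the
`R`-submodule of `S` generated by the coordinates of `u` (i.e. of the support of `u`). -/
noncomputable def vecrank (R : Type*) {S : Type*} {n : ℕ} [Semiring R] [AddCommMonoid S]
    [Module R S] (u : Fin n → S) : ℕ :=
  subrank (Submodule.span R (Set.range u))

/-- The minimum rank distance of a linear code `C ⊆ S^n`, ranks being taken over `K`. -/
noncomputable def minrkdist (K : Type*) {S : Type*} {n : ℕ} [Semiring K] [Ring S]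
    [Module K S] (C : Submodule S (Fin n → S)) : ℕ :=
  sInf {d | ∃ u ∈ C, ∃ v ∈ C, u ≠ v ∧ vecrank K (u - v) = d}

/-- The residue field of `S` as an algebra over the residue field of `R`, via the map
induced by `algebraMap R S`. -/
noncomputable instance residueFieldAlgebra {R S : Type*} [CommRing R] [IsLocalRing R]
    [CommRing S] [IsLocalRing S] [Algebra R S] [IsLocalHom (algebraMap R S)] :
    Algebra (ResidueField R) (ResidueField S) :=
  (ResidueField.map (algebraMap R S)).toAlgebra

/-- The socle of a submodule `C` of an ambient module, as a submodule of the ambient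
module: the sum of the minimal nonzero submodules contained in `C`. -/
noncomputable def socleIn {R M : Type*} [Semiring R] [AddCommMonoid M] [Module R M]
    (C : Submodule R M) : Submodule R M :=
  sSup {N : Submodule R M | IsAtom N ∧ N ≤ C}

/-! Let `ϖ` be the image of `π` in `S`; it generates the maximal ideal. The lifts `g'ⱼ` stay
linearly independent over `S`: if `ϖ^a ≠ 0` divides every coefficient of a relation, the quotient
combination is killed by `ϖ^a`, so none of its coordinates is a unit and its reduction is a
relation among the `gⱼ`; hence `ϖ^(a+1)` divides every coefficient. So an element of `C'` killed
by `ϖ` has its coefficients in `ann ϖ = ϖ^(ν-1) S`: the socle of `C'`, its `ϖ`-torsion, is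
`ϖ^(ν-1) C'`. Multiplication by `ϖ^(ν-1)` factors through an injective `S`-linear map
`F_{q^m} → S`; applied coordinatewise it carries `C` onto the socle, preserving the minimal number
of generators and the rank of every vector. -/

section Subrank

variable {A M N : Type*} [Semiring A] [AddCommMonoid M] [AddCommMonoid N] [Module A M]
  [Module A N]

theorem subrank_map_of_injective {f : M →ₗ[A] N} (hf : Function.Injective f)
    (P : Submodule A M) : subrank (P.map f) = subrank P := by
  unfold subrank
  congr 1
  ext j
  constructor
  · rintro ⟨v, hv⟩
    have hv_mem (i : Fin j) : ∃ x, f x = v i := by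
      have hvi : v i ∈ P.map f := hv ▸ Submodule.subset_span ⟨i, rfl⟩
      obtain ⟨x, -, hx⟩ := Submodule.mem_map.mp hvi
      exact ⟨x, hx⟩
    choose u hu using hv_mem
    refine ⟨u, Submodule.map_injective_of_injective hf ?_⟩
    rw [Submodule.map_span, ← Set.range_comp, show f ∘ u = v from funext hu, hv]
  · rintro ⟨u, hu⟩
    exact ⟨f ∘ u, by rw [Set.range_comp, ← Submodule.map_span, hu]⟩

theorem vecrank_comp_of_injective {f : M →ₗ[A] N} (hf : Function.Injective f) {n : ℕ}
    (u : Fin n → M) : vecrank A (f ∘ u) = vecrank A u := by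
  rw [vecrank, vecrank, Set.range_comp, ← Submodule.map_span, subrank_map_of_injective hf]

end Subrank

section RestrictScalars

variable {A B M : Type*} [CommSemiring A] [Semiring B] [Algebra A B] [AddCommMonoid M]
  [Module A M] [Module B M] [IsScalarTower A B M]

theorem subrank_restrictScalars (h : Function.Surjective (algebraMap A B))
    (P : Submodule B M) : subrank (P.restrictScalars A) = subrank P := by
  unfold subrank
  simp_rw [← Submodule.restrictScalars_span A B h, Submodule.restrictScalars_inj]

theorem vecrank_eq_of_surjective (h : Function.Surjective (algebraMap A B)) {n : ℕ}
    (u : Fin n → M) : vecrank A u = vecrank B u := by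
  rw [vecrank, vecrank, ← Submodule.restrictScalars_span A B h, subrank_restrictScalars h]

end RestrictScalars

theorem minrkdist_eq_of_injective {K₁ K₂ S₁ S₂ : Type*} {n : ℕ} [Semiring K₁] [Semiring K₂]
    [Ring S₁] [Ring S₂] [Module K₁ S₁] [Module K₂ S₂] {C₁ : Submodule S₁ (Fin n → S₁)}
    {C₂ : Submodule S₂ (Fin n → S₂)} (f : (Fin n → S₁) →+ (Fin n → S₂))
    (hf : Function.Injective f) (hC : (C₂ : Set (Fin n → S₂)) = f '' C₁)
    (hrk : ∀ u, vecrank K₂ (f u) = vecrank K₁ u) :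
    minrkdist K₂ C₂ = minrkdist K₁ C₁ := by
  unfold minrkdist
  congr 1
  ext δ
  simp only [Set.mem_ofPred_eq, ← SetLike.mem_coe, hC]
  constructor
  · rintro ⟨_, ⟨u, hu, rfl⟩, _, ⟨v, hv, rfl⟩, huv, rfl⟩
    exact ⟨u, hu, v, hv, fun h => huv (h ▸ rfl), by rw [← map_sub, hrk]⟩
  · rintro ⟨u, hu, v, hv, huv, rfl⟩
    exact ⟨f u, ⟨u, hu, rfl⟩, f v, ⟨v, hv, rfl⟩, hf.ne huv, by rw [← map_sub, hrk]⟩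

theorem subrank_eq_finrank {K V : Type*} [DivisionRing K] [AddCommGroup V] [Module K V]
    (P : Submodule K V) [Module.Finite K P] : subrank P = Module.finrank K P := by
  have hbasis : Module.finrank K P ∈ {j | ∃ f : Fin j → V, Submodule.span K (Set.range f) = P} :=
    ⟨P.subtype ∘ Module.finBasis K P, by
      rw [Set.range_comp, Submodule.span_image, (Module.finBasis K P).span_eq, Submodule.map_top,
        Submodule.range_subtype]⟩
  refine le_antisymm (Nat.sInf_le hbasis) (le_csInf ⟨_, hbasis⟩ ?_)
  rintro j ⟨f, rfl⟩
  simpa [Set.finrank] using finrank_range_le_card (R := K) f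

theorem linearIndependent_of_subrank_span_eq {K V : Type*} [DivisionRing K] [AddCommGroup V]
    [Module K V] {k : ℕ} (g : Fin k → V) (hg : subrank (Submodule.span K (Set.range g)) = k) :
    LinearIndependent K g := by
  have := FiniteDimensional.span_of_finite K (Set.finite_range g)
  rw [linearIndependent_iff_card_eq_finrank_span, Set.finrank, ← subrank_eq_finrank, hg,
    Fintype.card_fin]

theorem socleIn_eq_inf_torsionBySet {S M : Type*} [CommRing S] [IsLocalRing S] [AddCommGroup M]
    [Module S M] (C : Submodule S M) :
    socleIn C = C ⊓ Submodule.torsionBySet S M (maximalIdeal S) := by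
  apply le_antisymm
  · refine sSup_le fun N ⟨hN, hNC⟩ => le_inf hNC fun x hx => ?_
    have : IsSimpleModule S N := isSimpleModule_iff_isAtom.mpr hN
    have hann : Module.annihilator S N = maximalIdeal S :=
      eq_maximalIdeal IsSimpleModule.annihilator_isMaximal
    refine (Submodule.mem_torsionBySet_iff _ _).mpr fun ⟨a, ha⟩ => ?_
    rw [SetLike.mem_coe, ← hann, Module.mem_annihilator] at ha
    simpa using congrArg Subtype.val (ha ⟨x, hx⟩)
  · rintro x ⟨hxC, hx⟩
    rcases eq_or_ne x 0 with rfl | hx0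
    · exact zero_mem _
    have htors : Ideal.torsionOf S M x = maximalIdeal S := by
      refine le_antisymm (le_maximalIdeal fun h => hx0 ?_) fun a ha => ?_
      · rw [← one_smul S x]
        exact (Ideal.mem_torsionOf_iff x 1).mp (h ▸ Submodule.mem_top)
      · exact (Ideal.mem_torsionOf_iff x a).mpr
          ((Submodule.mem_torsionBySet_iff _ _).mp hx ⟨a, ha⟩)
    have hatom : IsAtom (S ∙ x) := by
      rw [← isSimpleModule_iff_isAtom, isSimpleModule_iff_quot_maximal]
      refine ⟨maximalIdeal S, inferInstance, ⟨?_⟩⟩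
      rw [← htors]
      exact (Ideal.quotTorsionOfEquivSpanSingleton S M x).symm
    have hmem : S ∙ x ∈ {N : Submodule S M | IsAtom N ∧ N ≤ C} :=
      ⟨hatom, (Submodule.span_singleton_le_iff_mem _ _).mpr hxC⟩
    exact le_sSup hmem (Submodule.mem_span_singleton_self x)

namespace IsLocalRing

variable {S : Type*} [CommRing S] [IsLocalRing S] {ϖ : S}

theorem pow_dvd_of_mul_eq_zero (hϖ : maximalIdeal S = Ideal.span {ϖ}) {N : ℕ} (hN : ϖ ^ N ≠ 0)
    {t : S} (ht : ϖ * t = 0) : ϖ ^ N ∣ t := by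
  suffices ∀ a ≤ N, ϖ ^ a ∣ t from this N le_rfl
  intro a
  induction a with
  | zero => simp
  | succ a ih =>
    intro ha
    obtain ⟨w, rfl⟩ := ih (by omega)
    have hw : w ∈ maximalIdeal S := by
      refine (mem_maximalIdeal w).mpr fun hu => hN ?_
      have : ϖ ^ (a + 1) = 0 := by
        rw [← hu.mul_left_eq_zero, pow_succ', mul_assoc, ht]
      rw [← Nat.add_sub_cancel' ha, pow_add, this, zero_mul]
    rw [hϖ, Ideal.mem_span_singleton] at hw
    obtain ⟨v, rfl⟩ := hw
    exact ⟨v, by ring⟩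

theorem linearIndependent_of_linearIndependent_residue (hϖ : maximalIdeal S = Ideal.span {ϖ})
    (hnil : IsNilpotent ϖ) {ι κ : Type*} [Fintype ι] {v : ι → κ → S}
    (hv : LinearIndependent (ResidueField S) fun j => residue S ∘ v j) :
    LinearIndependent S v := by
  rw [Fintype.linearIndependent_iff] at hv ⊢
  intro t ht
  obtain ⟨N, hN⟩ := hnil
  suffices ∀ a j, ϖ ^ a ∣ t j from fun j => by
    obtain ⟨w, hw⟩ := this N j
    rw [hw, hN, zero_mul]
  intro a
  induction a with
  | zero => simp
  | succ a ih =>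
    choose w hw using ih
    by_cases h0 : ϖ ^ a = 0
    · intro j
      rw [hw j, h0, zero_mul]
      exact dvd_zero _
    have hy (i : κ) : residue S ((∑ j, w j • v j) i) = 0 := by
      by_contra hne
      refine h0 (((residue_ne_zero_iff_isUnit _).mp hne).mul_left_eq_zero.mp ?_)
      have : ϖ ^ a • ∑ j, w j • v j = 0 := by
        simp only [Finset.smul_sum, smul_smul, ← hw, ht]
      simpa using congrFun this i
    have hres : ∑ j, residue S (w j) • (residue S ∘ v j) = 0 := by
      funext i
      simpa [map_sum] using hy i
    intro j
    have hwj : w j ∈ maximalIdeal S := (residue_eq_zero_iff _).mp (hv _ hres j)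
    rw [hϖ, Ideal.mem_span_singleton] at hwj
    obtain ⟨u, hu⟩ := hwj
    exact ⟨u, by rw [hw j, hu]; ring⟩

theorem exists_eq_pow_smul_of_smul_eq_zero (hϖ : maximalIdeal S = Ideal.span {ϖ}) {N : ℕ}
    (hN : ϖ ^ N ≠ 0) {ι M : Type*} [Fintype ι] [AddCommGroup M] [Module S M] {v : ι → M}
    (hv : LinearIndependent S v) {x : M} (hx : x ∈ Submodule.span S (Set.range v))
    (hϖx : ϖ • x = 0) : ∃ z ∈ Submodule.span S (Set.range v), x = ϖ ^ N • z := by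
  obtain ⟨t, rfl⟩ := (Submodule.mem_span_range_iff_exists_fun S).mp hx
  have hϖt (j : ι) : ϖ * t j = 0 := by
    refine Fintype.linearIndependent_iff.mp hv (fun j => ϖ * t j) ?_ j
    simpa only [Finset.smul_sum, smul_smul] using hϖx
  choose s hs using fun j => pow_dvd_of_mul_eq_zero hϖ hN (hϖt j)
  refine ⟨∑ j, s j • v j, Submodule.sum_mem _ fun j _ => Submodule.smul_mem _ _
    (Submodule.subset_span ⟨j, rfl⟩), ?_⟩
  simp only [Finset.smul_sum, smul_smul, ← hs]

variable (S) in
noncomputable def residueMul (a : S) (ha : ∀ s ∈ maximalIdeal S, s * a = 0) :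
    ResidueField S →ₗ[S] S :=
  (maximalIdeal S).liftQ (LinearMap.toSpanSingleton S S a) fun s hs => by simp [ha s hs]

theorem residueMul_residue (a : S) (ha : ∀ s ∈ maximalIdeal S, s * a = 0) (s : S) :
    residueMul S a ha (residue S s) = s * a :=
  rfl

theorem residueMul_injective {a : S} (ha : ∀ s ∈ maximalIdeal S, s * a = 0) (ha0 : a ≠ 0) :
    Function.Injective (residueMul S a ha) := by
  refine (injective_iff_map_eq_zero _).mpr fun y hy => ?_
  obtain ⟨s, rfl⟩ := residue_surjective y
  rw [residueMul_residue] at hy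
  by_contra hs
  exact ha0 (((residue_ne_zero_iff_isUnit s).mp hs).mul_right_eq_zero.mp hy)

theorem mul_pow_eq_zero_of_mem_maximalIdeal (hϖ : maximalIdeal S = Ideal.span {ϖ}) {N : ℕ}
    (hN : ϖ ^ (N + 1) = 0) : ∀ s ∈ maximalIdeal S, s * ϖ ^ N = 0 := by
  intro s hs
  rw [hϖ, Ideal.mem_span_singleton] at hs
  obtain ⟨t, rfl⟩ := hs
  rw [mul_right_comm, ← pow_succ', hN, zero_mul]

theorem map_compLeft_residue_span {ι κ : Type*} {g : ι → κ → ResidueField S} {g' : ι → κ → S}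
    (hg' : ∀ j i, residue S (g' j i) = g j i) :
    (Submodule.span S (Set.range g')).map ((Algebra.linearMap S (ResidueField S)).compLeft κ) =
      (Submodule.span (ResidueField S) (Set.range g)).restrictScalars S := by
  rw [Submodule.map_span, ← Set.range_comp, Submodule.restrictScalars_span S _ residue_surjective]
  congr
  funext j i
  exact hg' j i

theorem socleIn_span_eq_map_residueMul (hϖ : maximalIdeal S = Ideal.span {ϖ}) {N : ℕ}
    (hN : ϖ ^ N ≠ 0) (hN1 : ϖ ^ (N + 1) = 0) {ι κ : Type*} [Fintype ι] {g : ι → κ → ResidueField S}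
    (hg : LinearIndependent (ResidueField S) g) {g' : ι → κ → S}
    (hg' : ∀ j i, residue S (g' j i) = g j i) :
    socleIn (Submodule.span S (Set.range g')) =
      ((Submodule.span (ResidueField S) (Set.range g)).restrictScalars S).map
        ((residueMul S (ϖ ^ N) (mul_pow_eq_zero_of_mem_maximalIdeal hϖ hN1)).compLeft κ) := by
  have hker := mul_pow_eq_zero_of_mem_maximalIdeal hϖ hN1
  have hmul_pow (z : κ → S) : (residueMul S (ϖ ^ N) hker).compLeft κ
      ((Algebra.linearMap S (ResidueField S)).compLeft κ z) = ϖ ^ N • z := by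
    funext i
    exact (residueMul_residue _ hker (z i)).trans (mul_comm _ _)
  have hg'_ind : LinearIndependent S g' :=
    linearIndependent_of_linearIndependent_residue hϖ ⟨N + 1, hN1⟩
      (by convert hg using 1; funext j i; exact hg' j i)
  rw [socleIn_eq_inf_torsionBySet, hϖ, ← Ideal.submodule_span_eq,
    Submodule.torsionBySet_span_singleton_eq, ← map_compLeft_residue_span hg',
    ← Submodule.map_comp]
  ext x
  rw [Submodule.mem_inf, Submodule.mem_torsionBy_iff]
  constructor
  · rintro ⟨hx, hϖx⟩
    obtain ⟨z, hz, rfl⟩ := exists_eq_pow_smul_of_smul_eq_zero hϖ hN hg'_ind hx hϖx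
    exact ⟨z, hz, hmul_pow z⟩
  · rintro ⟨z, hz, rfl⟩
    rw [LinearMap.comp_apply, hmul_pow, smul_smul, ← pow_succ', hN1, zero_smul]
    exact ⟨Submodule.smul_mem _ _ hz, rfl⟩

end IsLocalRing

theorem socle_of_lifted_code_same_rank_same_minDist_general
    (R S : Type*) [CommRing R] [IsLocalRing R]
    [CommRing S] [IsLocalRing S]
    [Algebra R S] [IsLocalHom (algebraMap R S)] [Module.Free R S]
    (π : R) (hπ : Ideal.span {π} = maximalIdeal R)
    (ν : ℕ) (hν : 0 < ν) (hνnil : π ^ ν = 0) (hνmin : π ^ (ν - 1) ≠ 0)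
    (hGal : maximalIdeal S = Ideal.map (algebraMap R S) (maximalIdeal R))
    (n k d : ℕ) (g : Fin k → (Fin n → ResidueField S))
    (C : Submodule (ResidueField S) (Fin n → ResidueField S))
    (hC : C = Submodule.span (ResidueField S) (Set.range g))
    (hk : subrank C = k) (hd : minrkdist (ResidueField R) C = d)
    (g' : Fin k → (Fin n → S)) (hg' : ∀ j i, residue S (g' j i) = g j i)
    (C' : Submodule S (Fin n → S)) (hC' : C' = Submodule.span S (Set.range g')) :
    subrank (socleIn C') = k ∧ minrkdist R (socleIn C') = d := by
  set ϖ := algebraMap R S π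
  have hϖ : maximalIdeal S = Ideal.span {ϖ} := by
    rw [hGal, ← hπ, Ideal.map_span, Set.image_singleton]
  have hN1 : ϖ ^ (ν - 1 + 1) = 0 := by rw [Nat.sub_add_cancel hν, ← map_pow, hνnil, map_zero]
  have hN : ϖ ^ (ν - 1) ≠ 0 := by
    rw [← map_pow, map_ne_zero_iff _ (FaithfulSMul.algebraMap_injective R S)]
    exact hνmin
  set μ := residueMul S _ (mul_pow_eq_zero_of_mem_maximalIdeal hϖ hN1)
  have hμ : Function.Injective μ := residueMul_injective _ hN
  have hsoc := socleIn_span_eq_map_residueMul hϖ hN hN1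
    (linearIndependent_of_subrank_span_eq g (hC ▸ hk)) hg'
  rw [← hC', ← hC] at hsoc
  constructor
  · rw [hsoc, subrank_map_of_injective hμ.comp_left, subrank_restrictScalars residue_surjective, hk]
  · rw [← hd]
    refine minrkdist_eq_of_injective (μ.compLeft (Fin n)).toAddMonoidHom hμ.comp_left
      (by rw [hsoc, Submodule.map_coe]; rfl) fun c => ?_
    exact (vecrank_comp_of_injective (f := μ.restrictScalars R) hμ c).trans
      (vecrank_eq_of_surjective residue_surjective c)

/-- Let `R` be a finite commutative chain ring with maximal ideal
generated by `π` of nilpotency index `ν`, `S` a Galois extension of `R` of degree `m` with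
residue field `F_{q^m}` and natural projection `Ψ`.  Let `C` be an `F_{q^m}`-linear rank
metric code of length `n`, rank `k` and minimum rank distance `d`, generated by
`g₁, …, g_k`; choose `g'ⱼ ∈ S^n` with `Ψ(g'ⱼ) = gⱼ`, let `C'` be the `S`-linear code
generated by `g'₁, …, g'_k` and `C'' = soc(C')`.  Then `C''` is an `S`-linear rank metric
code of length `n`, rank `k`, and minimum rank distance `d`. -/
theorem socle_of_lifted_code_same_rank_same_minDist
    (R S : Type*) [CommRing R] [Finite R] [IsLocalRing R] [IsPrincipalIdealRing R]
    [CommRing S] [Finite S] [IsLocalRing S] [IsPrincipalIdealRing S]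
    [Algebra R S] [IsLocalHom (algebraMap R S)] [Module.Free R S]
    (π : R) (hπ : Ideal.span {π} = maximalIdeal R)
    (ν : ℕ) (hν : 0 < ν) (hνnil : π ^ ν = 0) (hνmin : π ^ (ν - 1) ≠ 0)
    (m : ℕ) (hm : Module.finrank R S = m)
    (hGal : maximalIdeal S = Ideal.map (algebraMap R S) (maximalIdeal R))
    (n k d : ℕ) (g : Fin k → (Fin n → ResidueField S))
    (C : Submodule (ResidueField S) (Fin n → ResidueField S))
    (hC : C = Submodule.span (ResidueField S) (Set.range g))
    (hk : subrank C = k) (hd : minrkdist (ResidueField R) C = d)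
    (g' : Fin k → (Fin n → S)) (hg' : ∀ j i, residue S (g' j i) = g j i)
    (C' : Submodule S (Fin n → S)) (hC' : C' = Submodule.span S (Set.range g')) :
    subrank (socleIn C') = k ∧ minrkdist R (socleIn C') = d :=
  socle_of_lifted_code_same_rank_same_minDist_general R S π hπ ν hν hνnil hνmin hGal n k d g C hC hk
    hd g' hg' C' hC'
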